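/- Let A be a symmetric split finite-dimensional k-algebra, let E be a maximal semisimple subalgebra of A (so that A = E ⊕ J(A) by Wedderburn–Malcev), and let f : A → A be an E-E-bimodule homomorphism (f(uav) = u f(a) v for all u,v ∈ E, a ∈ A) such that E + J(A)² ⊆ ker(f) and Im(f) ⊆ soc(A). Then f is a derivation of A; moreover z·f = 0 (i.e. z f(a) = 0 for all a ∈ A) for every z ∈ J(A) ∩ Z(A), and if f ≠ 0 then f is not an inner derivation of A. -/
import Mathlib


section DerivPrelim

variable (k : Type*) [CommRing k] (A : Type*) [Ring A] [Algebra k A]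

/-- A derivation of the `k`-algebra `A`: a `k`-linear map satisfying the Leibniz rule. -/
def IsDeriv (f : Module.End k A) : Prop := ∀ a b : A, f (a * b) = a * f b + f a * b

/-- An inner derivation `[c, -] : a ↦ c*a - a*c`. -/
def IsInner (f : Module.End k A) : Prop := ∃ c : A, ∀ a : A, f a = c * a - a * c

end DerivPrelim

section SymSplit

/-- `A` is a symmetric `k`-algebra: it admits a `k`-linear form `s` with `s(ab) = s(ba)`
whose kernel contains no nonzero left ideal. -/
def IsSymmetricAlg (k A : Type*) [CommRing k] [Ring A] [Algebra k A] : Prop :=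
  ∃ s : A →ₗ[k] k, (∀ a b : A, s (a * b) = s (b * a)) ∧
    ∀ I : Ideal A, (∀ a ∈ I, s a = 0) → I = ⊥

/-- `A` is a split `k`-algebra: `A/J(A)` is isomorphic, as a `k`-algebra, to a finite
product of full matrix algebras over `k`; equivalently there is a surjective `k`-algebra
homomorphism from `A` onto a finite product of matrix algebras over `k` whose kernel is
the Jacobson radical `J(A)`. -/
def IsSplitAlg (k A : Type*) [CommRing k] [Ring A] [Algebra k A] : Prop :=
  ∃ (n : ℕ) (d : Fin n → ℕ)
    (φ : A →ₐ[k] ∀ i : Fin n, Matrix (Fin (d i)) (Fin (d i)) k),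
    Function.Surjective φ ∧ ∀ a : A, φ a = 0 ↔ a ∈ Ideal.jacobson (⊥ : Ideal A)

end SymSplit

/-- Theorem (socle derivations): if `A` is a symmetric split algebra, `E` a maximal
semisimple subalgebra (so `A = E ⊕ J(A)`), and `f : A → A` an `E`-`E`-bimodule map with
`E + J(A)² ⊆ ker f` and `Im f ⊆ soc(A)`, then `f` is a derivation, annihilated by
`J(A) ∩ Z(A) = J(Z(A))` (i.e. `f ∈ soc_{Z(A)}(Der A)`), and `f` is not inner unless it
is zero. -/
theorem socle_derivation_of_symmetric_split
    (k : Type*) [Field k] (A : Type*) [Ring A] [Algebra k A] [FiniteDimensional k A]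
    (hsym : IsSymmetricAlg k A) (hsplit : IsSplitAlg k A)
    (E : Subalgebra k A) (hss : IsSemisimpleRing ↥E)
    (hmax : ∀ E' : Subalgebra k A, IsSemisimpleRing ↥E' → E ≤ E' → E = E')
    (hE1 : Subalgebra.toSubmodule E ⊓
      Submodule.restrictScalars k (Ideal.jacobson (⊥ : Ideal A)) = ⊥)
    (hE2 : Subalgebra.toSubmodule E ⊔
      Submodule.restrictScalars k (Ideal.jacobson (⊥ : Ideal A)) = ⊤)
    (f : A →ₗ[k] A)
    (hbimod : ∀ u ∈ E, ∀ v ∈ E, ∀ a : A, f (u * a * v) = u * f a * v)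
    (hker : ∀ a ∈ Subalgebra.toSubmodule E ⊔
      (Submodule.restrictScalars k (Ideal.jacobson (⊥ : Ideal A)) *
        Submodule.restrictScalars k (Ideal.jacobson (⊥ : Ideal A)) : Submodule k A),
      f a = 0)
    (him : ∀ a : A, ∀ r ∈ Ideal.jacobson (⊥ : Ideal A), r * f a = 0) :
    IsDeriv k A f ∧
    (∀ z ∈ Subalgebra.center k A, z ∈ Ideal.jacobson (⊥ : Ideal A) → ∀ a : A, z * f a = 0) ∧
    (f ≠ 0 → ¬ IsInner k A f) := by

  classical
  obtain ⟨s, hs, hsI⟩ := hsym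
  set J : Ideal A := Ideal.jacobson (⊥ : Ideal A) with hJdef
  -- J is closed under right multiplication
  have hJr : ∀ y ∈ J, ∀ r : A, y * r ∈ J := by
    intro y hy r
    rw [hJdef, Ideal.mem_jacobson_iff] at hy ⊢
    intro w
    obtain ⟨z, hz⟩ := hy (r * w)
    rw [Ideal.mem_bot] at hz
    have key : z * (r * w) * y + z = 1 := sub_eq_zero.mp hz
    refine ⟨1 - w * y * z * r, ?_⟩
    rw [Ideal.mem_bot]
    have expand : (1 - w * y * z * r) * w * (y * r) + (1 - w * y * z * r) - 1
        = w * y * r - w * y * ((z * (r * w) * y + z) * r) := by noncomm_ring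
    rw [expand, key, one_mul, sub_self]
  -- An element all of whose left multiples are killed by s is zero
  have hzero : ∀ v : A, (∀ b : A, s (b * v) = 0) → v = 0 := by
    intro v hv
    have hspan : Ideal.span {v} = ⊥ := by
      apply hsI
      intro a ha
      rw [Ideal.span, Submodule.mem_span_singleton] at ha
      obtain ⟨r, rfl⟩ := ha
      simpa [smul_eq_mul] using hv r
    have hmem : v ∈ Ideal.span {v} := Ideal.subset_span rfl
    rw [hspan] at hmem
    simpa using hmem
  -- right annihilation: f a * y = 0 for y ∈ J
  have hsocR : ∀ a : A, ∀ y ∈ J, f a * y = 0 := by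
    intro a y hy
    apply hzero
    intro b
    have h1 : y * b ∈ J := hJr y hy b
    have h2 : (y * b) * f a = 0 := him a (y * b) h1
    calc s (b * (f a * y)) = s ((b * f a) * y) := by rw [mul_assoc]
      _ = s (y * (b * f a)) := hs _ _
      _ = s ((y * b) * f a) := by rw [mul_assoc]
      _ = 0 := by rw [h2, map_zero]
  -- f vanishes on E
  have hfE : ∀ u ∈ E, f u = 0 := by
    intro u hu
    exact hker u (Submodule.mem_sup_left (by simpa using hu))
  -- f vanishes on J*J
  have hfJJ : ∀ x ∈ J, ∀ y ∈ J, f (x * y) = 0 := by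
    intro x hx y hy
    refine hker _ (Submodule.mem_sup_right ?_)
    exact Submodule.mul_mem_mul (by simpa using hx) (by simpa using hy)
  -- decomposition
  have hdec : ∀ a : A, ∃ u ∈ E, ∃ x ∈ J, u + x = a := by
    intro a
    have ha : a ∈ Subalgebra.toSubmodule E ⊔
        Submodule.restrictScalars k (Ideal.jacobson (⊥ : Ideal A)) := by
      rw [hE2]; trivial
    obtain ⟨u, hu, x, hx, hux⟩ := Submodule.mem_sup.mp ha
    exact ⟨u, by simpa using hu, x, by simpa using hx, hux⟩
  -- bimodule specializations
  have hfl : ∀ u ∈ E, ∀ a : A, f (u * a) = u * f a := by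
    intro u hu a
    have := hbimod u hu 1 (one_mem E) a
    simpa using this
  have hfr : ∀ v ∈ E, ∀ a : A, f (a * v) = f a * v := by
    intro v hv a
    have := hbimod 1 (one_mem E) v hv a
    simpa using this
  refine ⟨?_, ?_, ?_⟩
  · -- derivation
    intro a b
    obtain ⟨u, hu, x, hx, rfl⟩ := hdec a
    obtain ⟨v, hv, y, hy, rfl⟩ := hdec b
    have e1 : f (u + x) = f x := by rw [map_add, hfE u hu, zero_add]
    have e2 : f (v + y) = f y := by rw [map_add, hfE v hv, zero_add]
    have hL : f ((u + x) * (v + y)) = u * f y + f x * v := by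
      have hprod : (u + x) * (v + y) = u * v + (u * y + (x * v + x * y)) := by
        noncomm_ring
      rw [hprod, map_add, map_add, map_add, hfE _ (mul_mem hu hv),
        hfl u hu y, hfr v hv x, hfJJ x hx y hy]
      abel
    have hR : (u + x) * f (v + y) + f (u + x) * (v + y) = u * f y + f x * v := by
      rw [e1, e2, add_mul, mul_add, him y x hx, hsocR x y hy]
      abel
    rw [hL, hR]
  · -- central radical annihilates the image
    intro z _ hzJ a
    exact him a z hzJ
  · -- not inner
    intro hf0 hinner
    obtain ⟨c, hc⟩ := hinner
    apply hf0
    -- c commutes with E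
    have hcE : ∀ w ∈ E, c * w = w * c := by
      intro w hw
      have h0 : f w = 0 := hfE w hw
      have := hc w
      rw [h0] at this
      exact (sub_eq_zero.mp this.symm)
    -- key case: u ∈ E
    have caseE : ∀ u ∈ E, ∀ b : A, s (c * (u * b)) = s (c * (b * u)) := by
      intro u hu b
      calc s (c * (u * b)) = s ((c * u) * b) := by rw [mul_assoc]
        _ = s ((u * c) * b) := by rw [hcE u hu]
        _ = s (u * (c * b)) := by rw [mul_assoc]
        _ = s ((c * b) * u) := hs _ _
        _ = s (c * (b * u)) := by rw [mul_assoc]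
    -- key case: both in J
    have caseJJ : ∀ x ∈ J, ∀ y ∈ J, s (c * (x * y)) = s (c * (y * x)) := by
      intro x hx y hy
      have h0 : f x * y = 0 := hsocR x y hy
      rw [hc x] at h0
      have h1 : (c * x) * y = (x * c) * y := by
        calc (c * x) * y = (c * x - x * c) * y + (x * c) * y := by noncomm_ring
          _ = (x * c) * y := by rw [h0]; abel
      calc s (c * (x * y)) = s ((c * x) * y) := by rw [mul_assoc]
        _ = s ((x * c) * y) := by rw [h1]
        _ = s (x * (c * y)) := by rw [mul_assoc]
        _ = s ((c * y) * x) := hs _ _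
        _ = s (c * (y * x)) := by rw [mul_assoc]
    have hexp : ∀ a b : A, s (c * (a * b)) = s (c * (b * a)) := by
      intro a b
      obtain ⟨u, hu, x, hx, rfl⟩ := hdec a
      obtain ⟨v, hv, y, hy, rfl⟩ := hdec b
      have h1 : (u + x) * (v + y) = u * v + (u * y + (x * v + x * y)) := by
        noncomm_ring
      have h2 : (v + y) * (u + x) = v * u + (y * u + (v * x + y * x)) := by
        noncomm_ring
      rw [h1, h2]
      simp only [mul_add, map_add]
      rw [caseE u hu v, caseE u hu y, ← caseE v hv x, caseJJ x hx y hy]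
    have hfa : ∀ a : A, f a = 0 := by
      intro a
      apply hzero
      intro b
      have e : b * f a = b * (c * a) - (b * a) * c := by
        rw [hc a]; noncomm_ring
      rw [e, map_sub]
      have e1 : s (b * (c * a)) = s (c * (a * b)) := by
        rw [hs b (c * a), mul_assoc]
      have e2 : s ((b * a) * c) = s (c * (b * a)) := hs _ _
      rw [e1, e2, hexp a b, sub_self]
    ext a
    simpa using hfa a
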